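/- arXiv:2605.28273 — 2 statements merged into one kernel-verified Lean document; each statement's English description precedes it below -/
import Mathlib

section
/- For every restricted-game-based meta-strategy solver (RGB-MSS) M, every N ∈ ℕ, and every initial pure strategy π₀ ∈ Fin N, there exists a skew-symmetric payoff matrix A : Fin N → Fin N → ℝ such that every PSRO trajectory driven by M on A with exact best-response oracle starting from π₀ satisfies at least one of: (i) PE({s 0, …, s t}) > 0 for all t (the trajectory never reaches a Nash equilibrium); or (ii) the first t with PE({s 0, …, s t}) = 0 satisfies t ≥ N − 1, i.e., PE reaches zero only after all N pure strategies have been incorporated. -/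
/-!
Put the strategies on a ladder with rungs `0, …, n` (`N = n + 1`), `π₀` on rung `0`: rung `j + 1`
beats rung `j` by the margin `B = 2 (n + 1)²`, and otherwise a higher rung loses by `1` to a lower
one. A strategy more than one rung above the current population loses to all of it, so its payoff
is `-1`, whereas skew-symmetry forces every best response to have payoff `≥ 0`: PSRO climbs at most
one rung per iteration. Against a mixture `σ` that avoids the top rung, if every pure strategy
earned less than `1`, playing rung `a + 1` would give `B σ_a ≤ B σ_{a+2} + 2`, so walking down the
ladder `B σ_a ≤ 2n` and the total weight would be at most `2n (n + 1) / B < 1`. Hence the population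
exploitability is at least `1` until the top rung enters the population, after `n` iterations.
-/

/-- Payoff of pure strategy `i` against mixed strategy `σ`: `(Aσ) i = ∑ j, A i j * σ j`. -/
noncomputable def pay {N : ℕ} (A : Fin N → Fin N → ℝ) (σ : Fin N → ℝ) (i : Fin N) : ℝ :=
  ∑ j, A i j * σ j

/-- `max_i (Aσ) i`. -/
noncomputable def maxPay {N : ℕ} (A : Fin N → Fin N → ℝ) (σ : Fin N → ℝ) : ℝ :=
  ⨆ i, pay A σ i

/-- `σ` is a mixed strategy supported inside `P`. -/
def SuppIn {N : ℕ} (P : Set (Fin N)) (σ : Fin N → ℝ) : Prop :=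
  σ ∈ stdSimplex ℝ (Fin N) ∧ ∀ j ∉ P, σ j = 0

/-- Population exploitability of a population `P`:
the least value of `max_i (Aσ) i` over mixed strategies supported in `P`. -/
noncomputable def PE {N : ℕ} (A : Fin N → Fin N → ℝ) (P : Set (Fin N)) : ℝ :=
  sInf (maxPay A '' {σ | SuppIn P σ})

/-- `i` is a best response to `σ`. -/
def IsBR {N : ℕ} (A : Fin N → Fin N → ℝ) (σ : Fin N → ℝ) (i : Fin N) : Prop :=
  pay A σ i = maxPay A σ

/-- A restricted-game-based meta-strategy solver (RGB-MSS): for each `d ≥ 1`,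
a map from `d × d` real matrices to the standard simplex on `Fin d`. -/
def IsMSS (M : (d : ℕ) → (Fin d → Fin d → ℝ) → (Fin d → ℝ)) : Prop :=
  ∀ d, 0 < d → ∀ U, M d U ∈ stdSimplex ℝ (Fin d)

/-- The full-game mixed strategy `σ_t` induced by the MSS output on the restricted
game built from the first `t+1` strategies of the trajectory `s`. -/
noncomputable def psroMix {N : ℕ} (M : (d : ℕ) → (Fin d → Fin d → ℝ) → (Fin d → ℝ))
    (A : Fin N → Fin N → ℝ) (s : ℕ → Fin N) (t : ℕ) : Fin N → ℝ :=
  fun k => ∑ i : Fin (t + 1),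
    if s i.1 = k then M (t + 1) (fun a b : Fin (t + 1) => A (s a.1) (s b.1)) i else 0

/-- A PSRO trajectory with exact best-response oracle driven by the MSS `M`
on the game `A`, starting from the pure strategy `π₀`. -/
def IsPSROTraj {N : ℕ} (M : (d : ℕ) → (Fin d → Fin d → ℝ) → (Fin d → ℝ))
    (A : Fin N → Fin N → ℝ) (π₀ : Fin N) (s : ℕ → Fin N) : Prop :=
  s 0 = π₀ ∧ ∀ t, IsBR A (psroMix M A s t) (s (t + 1))

/-- The population `{s 0, …, s t}`. -/
def popUpTo {N : ℕ} (s : ℕ → Fin N) (t : ℕ) : Set (Fin N) :=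
  {k | ∃ i ≤ t, s i = k}

open Finset

lemma pay_le_maxPay {N : ℕ} (A : Fin N → Fin N → ℝ) (σ : Fin N → ℝ) (i : Fin N) :
    pay A σ i ≤ maxPay A σ :=
  le_ciSup (Set.finite_range _).bddAbove i

section SkewGames

variable {N : ℕ} {A : Fin N → Fin N → ℝ} {σ : Fin N → ℝ}

lemma sum_mul_pay_eq_zero (hA : ∀ i j, A j i = -A i j) :
    ∑ i, σ i * pay A σ i = 0 := by
  have hneg : ∑ i, σ i * pay A σ i = -∑ i, σ i * pay A σ i :=
    calc ∑ i, σ i * pay A σ i = ∑ i, ∑ j, σ i * (A i j * σ j) := by simp only [pay, mul_sum]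
      _ = ∑ j, ∑ i, σ i * (A i j * σ j) := sum_comm
      _ = ∑ j, ∑ i, -(σ j * (A j i * σ i)) := by
          refine sum_congr rfl fun j _ => sum_congr rfl fun i _ => ?_
          rw [hA j i]
          ring
      _ = -∑ i, σ i * pay A σ i := by simp only [pay, mul_sum, sum_neg_distrib]
  linarith

lemma maxPay_nonneg (hA : ∀ i j, A j i = -A i j) (hσ : σ ∈ stdSimplex ℝ (Fin N)) :
    0 ≤ maxPay A σ :=
  calc 0 = ∑ i, σ i * pay A σ i := (sum_mul_pay_eq_zero hA).symm
    _ ≤ ∑ i, σ i * maxPay A σ :=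
        sum_le_sum fun i _ => mul_le_mul_of_nonneg_left (pay_le_maxPay A σ i) (hσ.1 i)
    _ = maxPay A σ := by rw [← sum_mul, hσ.2, one_mul]

lemma le_PE_of_forall_le {P : Set (Fin N)} {c : ℝ} (hP : P.Nonempty)
    (h : ∀ σ, SuppIn P σ → c ≤ maxPay A σ) : c ≤ PE A P := by
  obtain ⟨p, hp⟩ := hP
  have hsingle : SuppIn P (Pi.single p 1) :=
    ⟨single_mem_stdSimplex ℝ p,
      fun j hj => Pi.single_eq_of_ne (ne_of_mem_of_not_mem hp hj).symm _⟩
  refine le_csInf ⟨_, _, hsingle, rfl⟩ ?_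
  rintro _ ⟨σ, hσ, rfl⟩
  exact h σ hσ

end SkewGames

lemma psroMix_suppIn {N : ℕ} {M : (d : ℕ) → (Fin d → Fin d → ℝ) → (Fin d → ℝ)} (hM : IsMSS M)
    (A : Fin N → Fin N → ℝ) (s : ℕ → Fin N) (t : ℕ) :
    SuppIn (popUpTo s t) (psroMix M A s t) := by
  have hμ := hM (t + 1) t.succ_pos fun a b : Fin (t + 1) => A (s a) (s b)
  refine ⟨⟨fun k => sum_nonneg fun i _ => ?_, ?_⟩, fun k hk => sum_eq_zero fun i _ => ?_⟩
  · split_ifs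
    exacts [hμ.1 i, le_rfl]
  · unfold psroMix
    rw [sum_comm]
    simpa only [sum_ite_eq, mem_univ, if_true] using hμ.2
  · exact if_neg fun hik => hk ⟨i, Nat.lt_succ_iff.mp i.2, hik⟩

noncomputable def ladder (n i j : ℕ) : ℝ :=
  if i = j then 0
  else if i = j + 1 then 2 * (n + 1) ^ 2
  else if j = i + 1 then -(2 * (n + 1) ^ 2)
  else if j < i then -1 else 1

namespace ladder

variable (n : ℕ)

lemma antisymm (i j : ℕ) : ladder n j i = -ladder n i j := by
  unfold ladder
  split_ifs <;> first | omega | norm_num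

lemma succ_self (j : ℕ) : ladder n (j + 1) j = 2 * (n + 1) ^ 2 := by
  unfold ladder
  split_ifs <;> first | omega | rfl

lemma self_succ (i : ℕ) : ladder n i (i + 1) = -(2 * (n + 1) ^ 2) := by
  rw [antisymm, succ_self]

lemma of_succ_lt {i j : ℕ} (h : j + 1 < i) : ladder n i j = -1 := by
  unfold ladder
  split_ifs <;> first | omega | rfl

lemma neg_one_le {i j : ℕ} (h : j ≠ i + 1) : -1 ≤ ladder n i j := by
  have hB : (0 : ℝ) ≤ 2 * (n + 1) ^ 2 := by positivity
  unfold ladder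
  split_ifs <;> first | omega | linarith

end ladder

lemma le_mul_of_le_add_two {n : ℕ} {g : ℕ → ℝ} {c : ℝ} (hc : 0 ≤ c)
    (hzero : ∀ k, n ≤ k → g k = 0) (hstep : ∀ a < n, g a ≤ g (a + 2) + c) (a : ℕ) :
    g a ≤ n * c := by
  suffices h : ∀ k a, n ≤ a + k → g a ≤ k * c from h n a (by omega)
  intro k
  induction k with
  | zero => intro a ha; simp [hzero a (by omega)]
  | succ k ih =>
    intro a ha
    by_cases han : a < n
    · have := ih (a + 2) (by omega)
      have := hstep a han
      push_cast
      linarith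
    · rw [hzero a (by omega)]
      positivity

section LadderCore

variable {n : ℕ} {f : ℕ → ℝ}

lemma sum_ladder_succ_mul_ge (hf0 : ∀ k, 0 ≤ f k) (hf1 : ∑ k ∈ range (n + 1), f k = 1)
    {a : ℕ} (ha : a ≤ n) :
    2 * (n + 1) ^ 2 * (f a - f (a + 2)) - 1 ≤ ∑ k ∈ range (n + 1), ladder n (a + 1) k * f k := by
  set B : ℝ := 2 * (n + 1) ^ 2
  have hpoint : ∀ k, B * (if k = a then f k else 0) - B * (if k = a + 2 then f k else 0) - f k
      ≤ ladder n (a + 1) k * f k := by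
    intro k
    by_cases hka : k = a
    · subst hka
      rw [ladder.succ_self, if_pos rfl, if_neg (by omega)]
      linarith [hf0 k]
    by_cases hka2 : k = a + 2
    · subst hka2
      rw [ladder.self_succ, if_neg hka, if_pos rfl]
      linarith [hf0 (a + 2)]
    · rw [if_neg hka, if_neg hka2]
      nlinarith [ladder.neg_one_le n (i := a + 1) (j := k) (by omega), hf0 k]
  have hB : 0 ≤ B := by positivity
  calc B * (f a - f (a + 2)) - 1
      ≤ B * f a - B * (if a + 2 ∈ range (n + 1) then f (a + 2) else 0) - 1 := by
        split_ifs <;> nlinarith [hf0 (a + 2)]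
    _ = ∑ k ∈ range (n + 1),
          (B * (if k = a then f k else 0) - B * (if k = a + 2 then f k else 0) - f k) := by
        rw [sum_sub_distrib, sum_sub_distrib, ← mul_sum, ← mul_sum, sum_ite_eq', sum_ite_eq',
          hf1, if_pos (mem_range.2 (by omega : a < n + 1))]
    _ ≤ _ := sum_le_sum fun k _ => hpoint k

lemma one_le_of_sum_ladder_mul_le (hf0 : ∀ k, 0 ≤ f k) (hf1 : ∑ k ∈ range (n + 1), f k = 1)
    (hfn : ∀ k, n ≤ k → f k = 0) {ε : ℝ}
    (hε : ∀ a ≤ n, ∑ k ∈ range (n + 1), ladder n a k * f k ≤ ε) : 1 ≤ ε := by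
  by_contra! hε1
  set B : ℝ := 2 * (n + 1) ^ 2
  have hε0 : 0 ≤ 1 + ε := by
    have hlow : -1 ≤ ∑ k ∈ range (n + 1), ladder n n k * f k :=
      calc (-1 : ℝ) = ∑ k ∈ range (n + 1), -1 * f k := by rw [← mul_sum, hf1, mul_one]
        _ ≤ _ := sum_le_sum fun k hk => mul_le_mul_of_nonneg_right
          (ladder.neg_one_le n (by simp at hk; omega)) (hf0 k)
    linarith [hε n le_rfl]
  have hbound : ∀ a, B * f a ≤ n * (1 + ε) :=
    le_mul_of_le_add_two (g := fun k => B * f k) hε0 (fun k hk => by simp [hfn k hk])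
      fun a ha => by linarith [sum_ladder_succ_mul_ge hf0 hf1 ha.le, hε (a + 1) ha]
  have : B ≤ (n + 1) * (n * (1 + ε)) :=
    calc B = ∑ k ∈ range (n + 1), B * f k := by rw [← mul_sum, hf1, mul_one]
      _ ≤ ∑ k ∈ range (n + 1), n * (1 + ε) := sum_le_sum fun k _ => hbound k
      _ = (n + 1) * (n * (1 + ε)) := by simp
  have hn : (0 : ℝ) ≤ n := n.cast_nonneg
  nlinarith [mul_nonneg (mul_nonneg hn (by linarith : (0 : ℝ) ≤ n + 1)) (by linarith : 0 ≤ 1 - ε)]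

end LadderCore

section RelabeledLadder

variable {n : ℕ} (ρ : Fin (n + 1) ≃ Fin (n + 1))

noncomputable def relabeledLadder : Fin (n + 1) → Fin (n + 1) → ℝ :=
  fun i j => ladder n (ρ i) (ρ j)

lemma relabeledLadder_antisymm (i j : Fin (n + 1)) :
    relabeledLadder ρ j i = -relabeledLadder ρ i j :=
  ladder.antisymm n _ _

noncomputable def rungWeight (σ : Fin (n + 1) → ℝ) (k : ℕ) : ℝ :=
  if h : k < n + 1 then σ (ρ.symm ⟨k, h⟩) else 0

lemma sum_mul_eq_sum_rungWeight (g : ℕ → ℝ) (σ : Fin (n + 1) → ℝ) :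
    ∑ j, g (ρ j) * σ j = ∑ k ∈ range (n + 1), g k * rungWeight ρ σ k := by
  rw [← Fin.sum_univ_eq_sum_range (fun k => g k * rungWeight ρ σ k), ← ρ.symm.sum_comp]
  refine sum_congr rfl fun b _ => ?_
  rw [Equiv.apply_symm_apply, rungWeight, dif_pos b.isLt, Fin.eta]

lemma one_le_maxPay_relabeledLadder {σ : Fin (n + 1) → ℝ} (hσ : σ ∈ stdSimplex ℝ (Fin (n + 1)))
    (htop : ∀ j, (ρ j : ℕ) = n → σ j = 0) : 1 ≤ maxPay (relabeledLadder ρ) σ := by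
  refine one_le_of_sum_ladder_mul_le (n := n) (f := rungWeight ρ σ) (fun k => ?_) ?_
    (fun k hk => ?_) fun a ha => ?_
  · unfold rungWeight
    split_ifs
    exacts [hσ.1 _, le_rfl]
  · simpa [hσ.2] using (sum_mul_eq_sum_rungWeight ρ (fun _ => 1) σ).symm
  · unfold rungWeight
    split_ifs with h
    · exact htop _ (by simp; omega)
    · rfl
  · rw [← sum_mul_eq_sum_rungWeight]
    simpa [pay, relabeledLadder] using
      pay_le_maxPay (relabeledLadder ρ) σ (ρ.symm ⟨a, Nat.lt_succ_of_le ha⟩)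

lemma pay_relabeledLadder_eq_neg_one {P : Set (Fin (n + 1))} {σ : Fin (n + 1) → ℝ}
    (hσ : SuppIn P σ) {t : ℕ} (hP : ∀ j ∈ P, (ρ j : ℕ) ≤ t) {i : Fin (n + 1)}
    (hi : t + 1 < ρ i) : pay (relabeledLadder ρ) σ i = -1 := by
  calc pay (relabeledLadder ρ) σ i = ∑ j, -1 * σ j := sum_congr rfl fun j _ => ?_
    _ = -1 := by rw [← mul_sum, hσ.1.2, mul_one]
  by_cases hj : j ∈ P
  · rw [relabeledLadder, ladder.of_succ_lt n (by have := hP j hj; omega)]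
  · rw [hσ.2 j hj, mul_zero, mul_zero]

lemma IsPSROTraj.rung_le {M : (d : ℕ) → (Fin d → Fin d → ℝ) → (Fin d → ℝ)} (hM : IsMSS M)
    {π₀ : Fin (n + 1)} (hρ : ρ π₀ = 0) {s : ℕ → Fin (n + 1)}
    (hs : IsPSROTraj M (relabeledLadder ρ) π₀ s) (t : ℕ) :
    ∀ j ∈ popUpTo s t, (ρ j : ℕ) ≤ t := by
  induction t with
  | zero =>
    rintro _ ⟨i, hi, rfl⟩
    rw [Nat.le_zero.1 hi, hs.1, hρ, Fin.val_zero]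
  | succ t ih =>
    rintro _ ⟨i, hi, rfl⟩
    rcases Nat.lt_or_eq_of_le hi with hi | rfl
    · exact (ih _ ⟨i, Nat.lt_succ_iff.1 hi, rfl⟩).trans t.le_succ
    · by_contra! hrung
      have hσ := psroMix_suppIn hM (relabeledLadder ρ) s t
      have hBR : pay _ _ _ = maxPay _ _ := hs.2 t
      rw [pay_relabeledLadder_eq_neg_one ρ hσ ih hrung] at hBR
      linarith [maxPay_nonneg (relabeledLadder_antisymm ρ) hσ.1]

end RelabeledLadder

/-- worst-case behavior of PSRO with an RGB-MSS:
for every RGB-MSS `M`, size `N`, and initial pure strategy `π₀`, there is a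
skew-symmetric payoff matrix `A` on `Fin N` such that every PSRO trajectory
driven by `M` on `A` from `π₀` either (i) never achieves `PE = 0`, or
(ii) first achieves `PE = 0` only at an iteration `t ≥ N - 1`. -/
theorem stmt0 (M : (d : ℕ) → (Fin d → Fin d → ℝ) → (Fin d → ℝ)) (hM : IsMSS M)
    (N : ℕ) (π₀ : Fin N) :
    ∃ A : Fin N → Fin N → ℝ, (∀ i j, A j i = -A i j) ∧
      ∀ s : ℕ → Fin N, IsPSROTraj M A π₀ s →
        (∀ t, 0 < PE A (popUpTo s t)) ∨
        (∀ t, PE A (popUpTo s t) = 0 → N - 1 ≤ t) := by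
  obtain ⟨n, rfl⟩ : ∃ n, N = n + 1 := Nat.exists_eq_succ_of_ne_zero π₀.pos.ne'
  set ρ := Equiv.swap π₀ 0
  refine ⟨relabeledLadder ρ, relabeledLadder_antisymm ρ, fun s hs => Or.inr fun t hPE => ?_⟩
  by_contra! ht
  have hrung := hs.rung_le ρ hM (Equiv.swap_apply_left π₀ 0) t
  have hPE1 : 1 ≤ PE (relabeledLadder ρ) (popUpTo s t) :=
    le_PE_of_forall_le ⟨s 0, 0, t.zero_le, rfl⟩ fun σ hσ =>
      one_le_maxPay_relabeledLadder ρ hσ.1 fun j hj => hσ.2 j fun hjP => by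
        have := hrung j hjP
        omega
  linarith
end

section
/- Let n ≥ 2 and k ≥ 1, let p₁, …, p_{k−1}, p, q be probability vectors in the standard simplex on Fin n, let r₁, …, r_{k−1}, ε, e be real numbers with 0 ≤ e < ε and ε ≤ r_t for every 1 ≤ t ≤ k−1, and let i* be an index with p_{i*} ≤ 1/2. Then there exist u ∈ ℝ^n with u i > 0 for all i, δ′ > 0, and ε′ > 0 such that u_{i*} ≤ u i − ε′ for every i ≠ i*, ⟨p_t, u⟩ ≤ r_t − δ′ for every 1 ≤ t ≤ k−1, ⟨p, u⟩ ≥ e + δ′, and ⟨q, u⟩ ≥ δ′. -/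
/-- feasibility of the extension step with an ordering constraint:
as in the plain extension step, but additionally, given an index `istar` with
`p istar ≤ 1/2`, the vector `u` can be chosen with its `istar`-th coordinate smaller
than every other coordinate by a margin `ε' > 0`. -/
theorem stmt13 (n k : ℕ) (hn : 2 ≤ n) (hk : 1 ≤ k)
    (ps : Fin (k - 1) → Fin n → ℝ) (hps : ∀ t, ps t ∈ stdSimplex ℝ (Fin n))
    (p q : Fin n → ℝ) (hp : p ∈ stdSimplex ℝ (Fin n)) (hq : q ∈ stdSimplex ℝ (Fin n))
    (r : Fin (k - 1) → ℝ) (ε e : ℝ)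
    (he : 0 ≤ e) (heε : e < ε) (hεr : ∀ t, ε ≤ r t)
    (istar : Fin n) (histar : p istar ≤ 1 / 2) :
    ∃ u : Fin n → ℝ, ∃ δ' > (0 : ℝ), ∃ ε' > (0 : ℝ), (∀ i, 0 < u i) ∧
      (∀ i, i ≠ istar → u istar ≤ u i - ε') ∧
      (∀ t, ∑ i, ps t i * u i ≤ r t - δ') ∧
      e + δ' ≤ ∑ i, p i * u i ∧
      δ' ≤ ∑ i, q i * u i := by
  have hε : 0 < ε := lt_of_le_of_lt he heε
  set a : ℝ := (5 * e + 3 * ε) / 8 with ha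
  set b : ℝ := (e + ε) / 2 with hb
  set d : ℝ := (ε - e) / 8 with hd
  have hd0 : 0 < d := by simp [hd]; linarith
  have ha0 : 0 < a := by simp [ha]; linarith
  have hab : a < b := by simp [ha, hb]; linarith
  refine ⟨fun i => if i = istar then a else b, d, hd0, d, hd0, ?_, ?_, ?_, ?_, ?_⟩
  · intro i; by_cases h : i = istar <;> simp [h] <;> linarith
  · intro i hi; simp [hi, ha, hb, hd]; linarith
  · intro t
    have h1 := (hps t).1 istar
    have h2 := (hps t).2
    have key : ∑ i, ps t i * (if i = istar then a else b)
        = (∑ i, ps t i) * b - ps t istar * (b - a) := by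
      have step : ∀ i : Fin n, ps t i * (if i = istar then a else b)
          = ps t i * b - (if i = istar then ps t i * (b - a) else 0) := by
        intro i; by_cases h : i = istar <;> simp [h] <;> ring
      simp_rw [step]
      rw [Finset.sum_sub_distrib, Finset.sum_ite_eq' Finset.univ istar, ← Finset.sum_mul]
      simp
    rw [key, h2]
    have := hεr t
    nlinarith
  · have h1 := hp.1 istar
    have key : ∑ i, p i * (if i = istar then a else b)
        = (∑ i, p i) * b - p istar * (b - a) := by
      have step : ∀ i : Fin n, p i * (if i = istar then a else b)
          = p i * b - (if i = istar then p i * (b - a) else 0) := by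
        intro i; by_cases h : i = istar <;> simp [h] <;> ring
      simp_rw [step]
      rw [Finset.sum_sub_distrib, Finset.sum_ite_eq' Finset.univ istar, ← Finset.sum_mul]
      simp
    rw [key, hp.2]
    nlinarith
  · have h1 := hq.1 istar
    have h1' : q istar ≤ 1 := by
      rw [← hq.2]
      exact Finset.single_le_sum (fun i _ => hq.1 i) (Finset.mem_univ istar)
    have key : ∑ i, q i * (if i = istar then a else b)
        = (∑ i, q i) * b - q istar * (b - a) := by
      have step : ∀ i : Fin n, q i * (if i = istar then a else b)
          = q i * b - (if i = istar then q i * (b - a) else 0) := by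
        intro i; by_cases h : i = istar <;> simp [h] <;> ring
      simp_rw [step]
      rw [Finset.sum_sub_distrib, Finset.sum_ite_eq' Finset.univ istar, ← Finset.sum_mul]
      simp
    rw [key, hq.2]
    nlinarith
end
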